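/- The spaces c₀ and c₀₀ contain no nonzero right-symmetric points, while the right-symmetric points of c are exactly the sequences x with |x_n| = ‖x‖ for all n. -/

import Mathlib

open ENNReal Filter

/-- The space `c₀` of sequences converging to `0`, as a subspace of `ℓ∞`. -/
def czero (𝕂 : Type*) [RCLike 𝕂] : Submodule 𝕂 (lp (fun _ : ℕ => 𝕂) ∞) where
  carrier := {x | Tendsto (fun n => x n) atTop (nhds 0)}
  zero_mem' := by
    simpa [lp.coeFn_zero] using (tendsto_const_nhds : Tendsto (fun _ : ℕ => (0 : 𝕂)) atTop _)
  add_mem' := by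
    intro a b ha hb
    have h := (Set.mem_setOf_eq ▸ ha).add (Set.mem_setOf_eq ▸ hb)
    simpa [lp.coeFn_add, Set.mem_setOf_eq] using h
  smul_mem' := by
    intro c a ha
    have h := (Set.mem_setOf_eq ▸ ha).const_mul c
    simpa [lp.coeFn_smul, Set.mem_setOf_eq, smul_eq_mul] using h

/-- The space `c` of convergent sequences, as a subspace of `ℓ∞`. -/
def cconv (𝕂 : Type*) [RCLike 𝕂] : Submodule 𝕂 (lp (fun _ : ℕ => 𝕂) ∞) where
  carrier := {x | ∃ l : 𝕂, Tendsto (fun n => x n) atTop (nhds l)}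
  zero_mem' :=
    ⟨0, by simpa [lp.coeFn_zero] using
      (tendsto_const_nhds : Tendsto (fun _ : ℕ => (0 : 𝕂)) atTop _)⟩
  add_mem' := by
    rintro a b ⟨la, ha⟩ ⟨lb, hb⟩
    exact ⟨la + lb, by simpa [lp.coeFn_add] using ha.add hb⟩
  smul_mem' := by
    rintro c a ⟨la, ha⟩
    exact ⟨c * la, by simpa [lp.coeFn_smul, smul_eq_mul] using ha.const_mul c⟩

/-- The space `c₀₀` of eventually zero sequences, as a subspace of `ℓ∞`. -/
def cfin (𝕂 : Type*) [RCLike 𝕂] : Submodule 𝕂 (lp (fun _ : ℕ => 𝕂) ∞) where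
  carrier := {x | ∀ᶠ n in atTop, x n = 0}
  zero_mem' := by
    filter_upwards with n
    simp [lp.coeFn_zero]
  add_mem' := by
    intro a b ha hb
    have ha' : ∀ᶠ n in atTop, a n = 0 := ha
    have hb' : ∀ᶠ n in atTop, b n = 0 := hb
    filter_upwards [ha', hb'] with n h1 h2
    simp [lp.coeFn_add, h1, h2]
  smul_mem' := by
    intro c a ha
    have ha' : ∀ᶠ n in atTop, a n = 0 := ha
    filter_upwards [ha'] with n h1
    simp [lp.coeFn_smul, h1]

/-- Birkhoff-James orthogonality. -/
def BJOrth {𝕂 : Type*} [RCLike 𝕂] {X : Type*} [NormedAddCommGroup X] [NormedSpace 𝕂 X]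
    (x y : X) : Prop := ∀ lam : 𝕂, ‖x‖ ≤ ‖x + lam • y‖

/-- Right-symmetric point. -/
def RightSym {𝕂 : Type*} [RCLike 𝕂] {X : Type*} [NormedAddCommGroup X] [NormedSpace 𝕂 X]
    (x : X) : Prop := ∀ y : X, BJOrth (𝕂 := 𝕂) y x → BJOrth (𝕂 := 𝕂) x y

/-! If `|x n| = ‖x‖` for all `n` and `‖x + λ y‖ < ‖x‖`, then `Re (conj (x n) * λ y n)` is bounded
away from `0` uniformly in `n`, so adding a small real multiple of `x` lowers the norm of `λ y`:
`y ⊥ x` forces `x ⊥ y`.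

If instead `|x i| < ‖x‖`, take `y` equal to `-x / ‖x‖` off `i` and to the phase `u` of `x i` at `i`.
Then `y ⊥ x` (look at the coordinate `i` when `Re μ ≥ 0`, and at the others, where `|x n|` still
has supremum `‖x‖`, when `Re μ < 0`), but `x + t y` is shorter than `x` for small `t > 0`. As `y`
differs from a multiple of `x` in one coordinate, this works in every subspace containing `c₀₀`.
In `c₀` a sequence of constant modulus is `0`. -/

open RCLike ComplexConjugate

section Scalar

variable {𝕂 : Type*} [RCLike 𝕂]

lemma norm_add_sq_eq_re_conj_mul (a b : 𝕂) :
    ‖a + b‖ ^ 2 = ‖a‖ ^ 2 + 2 * re (conj a * b) + ‖b‖ ^ 2 := by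
  simpa only [RCLike.inner_apply'] using norm_add_sq (𝕜 := 𝕂) a b

lemma norm_add_ofReal_mul_sq_le {a b : 𝕂} {δ : ℝ} (hδ : 0 < δ) (hδa : δ ≤ ‖a‖)
    (hab : ‖a + b‖ ≤ ‖a‖ - δ) :
    ‖b + ((δ / (2 * ‖a‖) : ℝ) : 𝕂) * a‖ ^ 2 ≤ ‖b‖ ^ 2 - δ ^ 2 / 4 := by
  set M := ‖a‖
  set s : ℝ := δ / (2 * M) with hs
  have hM : 0 < M := hδ.trans_le hδa
  have hre : re (conj a * b) ≤ -(M * δ) / 2 := by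
    have hsq : ‖a + b‖ ^ 2 ≤ (M - δ) ^ 2 := pow_le_pow_left₀ (norm_nonneg _) hab 2
    nlinarith [norm_add_sq_eq_re_conj_mul a b, sq_nonneg ‖b‖]
  have hexpand : ‖b + (s : 𝕂) * a‖ ^ 2 =
      ‖b‖ ^ 2 + 2 * s * re (conj a * b) + (s * M) ^ 2 := by
    rw [add_comm, norm_add_sq_eq_re_conj_mul, (starRingEnd 𝕂).map_mul, conj_ofReal, mul_assoc,
      re_ofReal_mul, norm_mul, norm_ofReal, abs_of_nonneg (by positivity)]
    ring
  have hsM : s * M = δ / 2 := by rw [hs]; field_simp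
  have hs_re := mul_le_mul_of_nonneg_left hre (by positivity : 0 ≤ 2 * s)
  rw [hexpand, hsM]
  nlinarith

end Scalar

section Linfty

variable {ι 𝕂 : Type*} [RCLike 𝕂]

lemma exists_norm_add_smul_lt_of_norm_apply_eq {x z : lp (fun _ : ι => 𝕂) ∞}
    (hx : ∀ i, ‖x i‖ = ‖x‖) (hxz : ‖x + z‖ < ‖x‖) : ∃ s : 𝕂, ‖z + s • x‖ < ‖z‖ := by
  set δ := ‖x‖ - ‖x + z‖
  have hδ : 0 < δ := sub_pos.mpr hxz
  have hz : 0 < ‖z‖ := norm_pos_iff.mpr (by rintro rfl; simp at hxz)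
  set s : 𝕂 := ((δ / (2 * ‖x‖) : ℝ) : 𝕂)
  suffices h : ∀ i, ‖(z + s • x) i‖ ^ 2 ≤ ‖z‖ ^ 2 - δ ^ 2 / 4 from
    ⟨s, (lp.norm_le_of_forall_le (Real.sqrt_nonneg _) fun i => Real.le_sqrt_of_sq_le (h i)).trans_lt
      ((Real.sqrt_lt' hz).mpr (by nlinarith))⟩
  intro i
  have hxzi : ‖x i + z i‖ ≤ ‖x i‖ - δ := by
    simpa [hx i, δ] using lp.norm_apply_le_norm top_ne_zero (x + z) i
  calc ‖(z + s • x) i‖ ^ 2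
      = ‖z i + ((δ / (2 * ‖x i‖) : ℝ) : 𝕂) * x i‖ ^ 2 := by
        simp only [lp.coeFn_add, lp.coeFn_smul, Pi.add_apply, Pi.smul_apply, smul_eq_mul, hx i, s]
    _ ≤ ‖z i‖ ^ 2 - δ ^ 2 / 4 :=
      norm_add_ofReal_mul_sq_le hδ (by rw [hx i]; linarith [norm_nonneg (x + z)]) hxzi
    _ ≤ ‖z‖ ^ 2 - δ ^ 2 / 4 := by
      gcongr
      exact lp.norm_apply_le_norm top_ne_zero z i

lemma BJOrth.symm_of_norm_apply_eq {x y : lp (fun _ : ι => 𝕂) ∞} (hx : ∀ i, ‖x i‖ = ‖x‖)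
    (hyx : BJOrth (𝕂 := 𝕂) y x) : BJOrth (𝕂 := 𝕂) x y := by
  intro c
  by_contra! hlt
  obtain ⟨s, hs⟩ := exists_norm_add_smul_lt_of_norm_apply_eq hx hlt
  have hc : c ≠ 0 := by rintro rfl; simp at hlt
  have h := mul_le_mul_of_nonneg_left (hyx (s / c)) (norm_nonneg c)
  rw [← norm_smul, ← norm_smul, smul_add, smul_smul, mul_div_cancel₀ _ hc] at h
  exact hs.not_ge h

lemma rightSym_of_norm_apply_eq {x : lp (fun _ : ι => 𝕂) ∞} (hx : ∀ i, ‖x i‖ = ‖x‖) :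
    RightSym (𝕂 := 𝕂) x :=
  fun _ => BJOrth.symm_of_norm_apply_eq hx

lemma norm_le_of_apply_eq_of_ne {E : ι → Type*} [∀ i, NormedAddCommGroup (E i)] {v w : lp E ∞}
    {i : ι} (hv : ‖v i‖ < ‖v‖) (h : ∀ j, j ≠ i → v j = w j) : ‖v‖ ≤ ‖w‖ := by
  have hmax : ‖v‖ ≤ max ‖w‖ ‖v i‖ := by
    refine lp.norm_le_of_forall_le (le_max_of_le_left (norm_nonneg w)) fun j => ?_
    rcases eq_or_ne j i with rfl | hj
    · exact le_max_right _ _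
    · rw [h j hj]
      exact le_max_of_le_left (lp.norm_apply_le_norm top_ne_zero w j)
  exact (le_max_iff.mp hmax).resolve_right hv.not_ge

variable [DecidableEq ι]

noncomputable def updateCoord (f : lp (fun _ : ι => 𝕂) ∞) (i : ι) (c : 𝕂) : lp (fun _ : ι => 𝕂) ∞ :=
  f + lp.single ∞ i (c - f i)

@[simp]
lemma updateCoord_apply_self (f : lp (fun _ : ι => 𝕂) ∞) (i : ι) (c : 𝕂) :
    updateCoord f i c i = c := by
  simp [updateCoord]

lemma updateCoord_apply_of_ne (f : lp (fun _ : ι => 𝕂) ∞) {i j : ι} (c : 𝕂) (hj : j ≠ i) :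
    updateCoord f i c j = f j := by
  simp [updateCoord, hj]

section Witness

variable {x : lp (fun _ : ι => 𝕂) ∞} {i : ι} {u : 𝕂}

lemma norm_updateCoord_inv_norm_smul_le_one (hu : ‖u‖ = 1) :
    ‖updateCoord (-(‖x‖⁻¹ : 𝕂) • x) i u‖ ≤ 1 :=
  lp.norm_le_of_forall_le zero_le_one fun j => by
    rcases eq_or_ne j i with rfl | hj
    · rw [updateCoord_apply_self, hu]
    · rw [updateCoord_apply_of_ne _ _ hj, lp.coeFn_smul, Pi.smul_apply, norm_smul, norm_neg,
        norm_inv, norm_ofReal, abs_norm]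
      exact inv_mul_le_one_of_le₀ (lp.norm_apply_le_norm top_ne_zero x j) (norm_nonneg x)

lemma bjOrth_updateCoord_inv_norm_smul (hi : ‖x i‖ < ‖x‖) (hu : ‖u‖ = 1)
    (hxi : u * ‖x i‖ = x i) :
    BJOrth (𝕂 := 𝕂) (updateCoord (-(‖x‖⁻¹ : 𝕂) • x) i u) x := by
  set M := ‖x‖
  have hM : 0 < M := (norm_nonneg _).trans_lt hi
  set y := updateCoord (-(M⁻¹ : 𝕂) • x) i u
  have hy_off : ∀ j, j ≠ i → y j = -(M⁻¹ : 𝕂) * x j := fun j hj => by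
    rw [updateCoord_apply_of_ne _ _ hj, lp.coeFn_smul, Pi.smul_apply, smul_eq_mul]
  intro μ
  refine (norm_updateCoord_inv_norm_smul_le_one hu).trans ?_
  rcases le_or_gt 0 (re μ) with hμ | hμ
  · have hyi : (y + μ • x) i = u * (1 + μ * ‖x i‖) := by
      rw [lp.coeFn_add, lp.coeFn_smul, Pi.add_apply, Pi.smul_apply, smul_eq_mul,
        updateCoord_apply_self]
      linear_combination (-μ) * hxi
    calc (1 : ℝ) ≤ re (1 + μ * ‖x i‖) := by
          simp only [map_add, one_re, mul_re, ofReal_re, ofReal_im, mul_zero, sub_zero,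
            le_add_iff_nonneg_right]
          positivity
      _ ≤ ‖1 + μ * ‖x i‖‖ := re_le_norm _
      _ = ‖(y + μ • x) i‖ := by rw [hyi, norm_mul, hu, one_mul]
      _ ≤ ‖y + μ • x‖ := lp.norm_apply_le_norm top_ne_zero _ i
  · have hμM : M⁻¹ < ‖μ - (M⁻¹ : 𝕂)‖ := by
      have := re_le_norm ((M⁻¹ : 𝕂) - μ)
      rw [norm_sub_rev, map_sub, ← ofReal_inv, ofReal_re, ofReal_inv] at this
      linarith
    have hv : ‖((μ - (M⁻¹ : 𝕂)) • x) i‖ < ‖(μ - (M⁻¹ : 𝕂)) • x‖ := by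
      rw [lp.coeFn_smul, Pi.smul_apply, norm_smul, norm_smul]
      exact mul_lt_mul_of_pos_left hi ((inv_pos.mpr hM).trans hμM)
    have hv_norm : 1 < ‖(μ - (M⁻¹ : 𝕂)) • x‖ := by
      rw [norm_smul, ← inv_mul_cancel₀ hM.ne']
      exact mul_lt_mul_of_pos_right hμM hM
    refine hv_norm.le.trans (norm_le_of_apply_eq_of_ne hv fun j hj => ?_)
    rw [lp.coeFn_add, lp.coeFn_smul, lp.coeFn_smul, Pi.add_apply, Pi.smul_apply, Pi.smul_apply,
      hy_off j hj, smul_eq_mul, smul_eq_mul]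
    ring

lemma not_bjOrth_updateCoord_inv_norm_smul (hi : ‖x i‖ < ‖x‖) (hu : ‖u‖ = 1)
    (hxi : u * ‖x i‖ = x i) :
    ¬ BJOrth (𝕂 := 𝕂) x (updateCoord (-(‖x‖⁻¹ : 𝕂) • x) i u) := by
  set M := ‖x‖
  have hM : 0 < M := (norm_nonneg _).trans_lt hi
  set y := updateCoord (-(M⁻¹ : 𝕂) • x) i u
  set t : ℝ := (M - ‖x i‖) / 2
  have ht : 0 < t := by simp only [t]; linarith
  have hle : ‖x + (t : 𝕂) • y‖ ≤ M - t := by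
    refine lp.norm_le_of_forall_le (by simp only [t]; linarith [norm_nonneg (x i)]) fun j => ?_
    simp only [lp.coeFn_add, lp.coeFn_smul, Pi.add_apply, Pi.smul_apply, smul_eq_mul]
    rcases eq_or_ne j i with rfl | hj
    · rw [updateCoord_apply_self, ← hxi,
        show u * ‖x j‖ + t * u = u * ((‖x j‖ + t : ℝ) : 𝕂) by push_cast; ring,
        norm_mul, hu, one_mul, norm_ofReal, abs_of_pos (by positivity)]
      simp only [t]
      linarith
    · rw [updateCoord_apply_of_ne _ _ hj, lp.coeFn_smul, Pi.smul_apply, smul_eq_mul,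
        show x j + t * (-(M⁻¹ : 𝕂) * x j) = ((1 - t * M⁻¹ : ℝ) : 𝕂) * x j by push_cast; ring,
        norm_mul, norm_ofReal]
      have hscale : 0 ≤ 1 - t * M⁻¹ := by
        rw [sub_nonneg, ← div_eq_mul_inv, div_le_one hM]
        simp only [t]
        linarith [norm_nonneg (x i)]
      calc |1 - t * M⁻¹| * ‖x j‖ ≤ (1 - t * M⁻¹) * M := by
            rw [abs_of_nonneg hscale]
            exact mul_le_mul_of_nonneg_left (lp.norm_apply_le_norm top_ne_zero x j) hscale
        _ = M - t := by field_simp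
  intro hxy
  linarith [hxy t]

end Witness

end Linfty

section Subspace

variable {𝕂 : Type*} [RCLike 𝕂]

lemma RightSym.of_coe {E : Type*} [NormedAddCommGroup E] [NormedSpace 𝕂 E] {S : Submodule 𝕂 E}
    {x : S} (hx : RightSym (𝕂 := 𝕂) (x : E)) : RightSym (𝕂 := 𝕂) x :=
  fun y => hx y

lemma single_mem_cfin (i : ℕ) (c : 𝕂) : lp.single ∞ i c ∈ cfin 𝕂 :=
  (eventually_ne_atTop i).mono fun _ hj => lp.single_apply_ne (E := fun _ : ℕ => 𝕂) ∞ i c hj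

lemma cfin_le_czero : cfin 𝕂 ≤ czero 𝕂 := fun _ hx =>
  tendsto_const_nhds.congr' (EventuallyEq.symm hx)

lemma czero_le_cconv : czero 𝕂 ≤ cconv 𝕂 := fun _ hx => ⟨0, hx⟩

lemma updateCoord_mem {S : Submodule 𝕂 (lp (fun _ : ℕ => 𝕂) ∞)} (hS : cfin 𝕂 ≤ S)
    {f : lp (fun _ : ℕ => 𝕂) ∞} (hf : f ∈ S) (i : ℕ) (c : 𝕂) : updateCoord f i c ∈ S :=
  S.add_mem hf (hS (single_mem_cfin i _))

lemma norm_apply_eq_of_rightSym {S : Submodule 𝕂 (lp (fun _ : ℕ => 𝕂) ∞)} (hS : cfin 𝕂 ≤ S)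
    {x : S} (hx : RightSym (𝕂 := 𝕂) x) (n : ℕ) :
    ‖(x : lp (fun _ : ℕ => 𝕂) ∞) n‖ = ‖x‖ := by
  set v : lp (fun _ : ℕ => 𝕂) ∞ := x.1
  by_contra hne
  have hn : ‖v n‖ < ‖v‖ := (lp.norm_apply_le_norm top_ne_zero v n).lt_of_ne hne
  obtain ⟨u, hu, hvu⟩ := exists_norm_mul_eq_self (v n)
  let y : S := ⟨_, updateCoord_mem hS (S.smul_mem (-(‖v‖⁻¹ : 𝕂)) x.2) n u⟩
  exact not_bjOrth_updateCoord_inv_norm_smul hn hu hvu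
    (hx y (bjOrth_updateCoord_inv_norm_smul hn hu hvu))

lemma eq_zero_of_mem_czero_of_norm_apply_eq {x : lp (fun _ : ℕ => 𝕂) ∞} (hx : x ∈ czero 𝕂)
    (h : ∀ n, ‖x n‖ = ‖x‖) : x = 0 := by
  have hlim : Tendsto (fun _ : ℕ => ‖x‖) atTop (nhds 0) := by
    simpa [h] using (show Tendsto (fun n => x n) atTop (nhds 0) from hx).norm
  exact norm_eq_zero.mp (tendsto_const_nhds_iff.mp hlim)

lemma eq_zero_of_rightSym {S : Submodule 𝕂 (lp (fun _ : ℕ => 𝕂) ∞)} (hcfin : cfin 𝕂 ≤ S)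
    (hczero : S ≤ czero 𝕂) {x : S} (hx : RightSym (𝕂 := 𝕂) x) : x = 0 :=
  Subtype.ext <|
    eq_zero_of_mem_czero_of_norm_apply_eq (hczero x.2) (norm_apply_eq_of_rightSym hcfin hx)

end Subspace

theorem rightSymmetric_c_czero_cfin (𝕂 : Type*) [RCLike 𝕂] :
    (∀ x : czero 𝕂, RightSym (𝕂 := 𝕂) x → x = 0) ∧
    (∀ x : cfin 𝕂, RightSym (𝕂 := 𝕂) x → x = 0) ∧
    (∀ x : cconv 𝕂, RightSym (𝕂 := 𝕂) x ↔
      ∀ n : ℕ, ‖(x : lp (fun _ : ℕ => 𝕂) ∞) n‖ = ‖x‖) :=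
  ⟨fun _ => eq_zero_of_rightSym cfin_le_czero le_rfl,
    fun _ => eq_zero_of_rightSym le_rfl cfin_le_czero,
    fun _ => ⟨fun hx => norm_apply_eq_of_rightSym (cfin_le_czero.trans czero_le_cconv) hx,
      fun hx => RightSym.of_coe (rightSym_of_norm_apply_eq hx)⟩⟩
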